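/- arXiv:2112.06946 — 2 statements merged into one kernel-verified Lean document; each statement's English description precedes it below -/
import Mathlib

section
/- On ⊗_{x=1}^{L} ℂ^{q} where each site carries a diagonal number operator n̂_x with integer eigenvalues, let N̂ = Σ_x n̂_x, U = exp(i(2π/L) Σ_x x·n̂_x), and T the cyclic shift (which commutes with N̂). Then T U T* = exp(i 2π N̂ / L) · U. -/
open Matrix Complex

/-- The cyclic coordinate shift: `(shiftIdx L q g) i = g (i+1 mod L)`. -/
def shiftIdx (L q : ℕ) (g : Fin L → Fin q) : Fin L → Fin q :=
  fun i => g ⟨(i.val + 1) % L, Nat.mod_lt _ (Nat.lt_of_le_of_lt (Nat.zero_le _) i.isLt)⟩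

/-- The translation (cyclic shift) unitary on `(ℂ^q)^{⊗L}` (the convention shifting basis
labels by one site). -/
noncomputable def Tshift (L q : ℕ) : Matrix (Fin L → Fin q) (Fin L → Fin q) ℂ :=
  Matrix.of fun f g => if f = shiftIdx L q g then 1 else 0

/-- The total charge operator `N̂ = Σ_x n̂_x` for onsite number operators given by the diagonal
eigenvalue function `nhat`. -/
noncomputable def Nop (L q : ℕ) (nhat : Fin q → ℕ) :
    Matrix (Fin L → Fin q) (Fin L → Fin q) ℂ :=
  Matrix.diagonal fun f => ((∑ x, nhat (f x) : ℕ) : ℂ)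

/-- The large gauge transformation `U = exp(i (2π/L) Σ_x x n̂_x)` (site x = 1, ..., L carries
weight x). -/
noncomputable def Ugauge (L q : ℕ) (nhat : Fin q → ℕ) :
    Matrix (Fin L → Fin q) (Fin L → Fin q) ℂ :=
  Matrix.diagonal fun f =>
    Complex.exp ((2 * Real.pi / L) * Complex.I * ∑ x, ((x.val + 1 : ℕ) : ℂ) * (nhat (f x) : ℂ))

lemma shiftIdx_eq (m q : ℕ) (g : Fin (m+1) → Fin q) :
    shiftIdx (m+1) q g = g ∘ (finRotate (m+1)) := by
  funext i
  simp only [shiftIdx, Function.comp, finRotate_succ_apply]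
  congr 1
  ext
  simp [Fin.add_def, Nat.add_mod]

lemma shift_eq_iff (m q : ℕ) (f h : Fin (m+1) → Fin q) :
    f = shiftIdx (m+1) q h ↔ h = f ∘ (finRotate (m+1)).symm := by
  rw [shiftIdx_eq]
  constructor
  · rintro rfl
    funext i
    simp only [Function.comp_apply, Equiv.apply_symm_apply]
  · rintro rfl
    funext i
    simp only [Function.comp_apply, Equiv.symm_apply_apply]

lemma shiftIdx_comp_symm (m q : ℕ) (f : Fin (m+1) → Fin q) :
    shiftIdx (m+1) q (f ∘ (finRotate (m+1)).symm) = f := by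
  rw [shiftIdx_eq]
  funext i
  simp only [Function.comp_apply, Equiv.symm_apply_apply]

lemma nat_sum_key (m : ℕ) (n : Fin (m+1) → ℕ) :
    (∑ y : Fin (m+1), (((y.val + 1) % (m+1)) + 1) * n y) + (m+1) * n (Fin.last m)
      = (∑ y : Fin (m+1), n y) + ∑ y : Fin (m+1), (y.val + 1) * n y := by
  have h1 : ∀ y : Fin (m+1),
      (((y.val + 1) % (m+1)) + 1) * n y + (if y = Fin.last m then (m+1) * n y else 0)
        = n y + (y.val + 1) * n y := by
    intro y
    by_cases hy : y = Fin.last m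
    · subst hy
      rw [if_pos rfl, Fin.val_last, Nat.mod_self]
      ring
    · have hlt : y.val + 1 < m + 1 := by
        have := y.isLt
        have : y.val ≠ m := fun h => hy (Fin.ext h)
        omega
      rw [if_neg hy, Nat.mod_eq_of_lt hlt]
      ring
  have h2 := Finset.sum_congr rfl (fun y (_ : y ∈ Finset.univ) => h1 y)
  rw [Finset.sum_add_distrib, Finset.sum_ite_eq' Finset.univ (Fin.last m)] at h2
  simpa [Finset.sum_add_distrib] using h2

lemma scalar_key (m q : ℕ) (nhat : Fin q → ℕ) (f : Fin (m+1) → Fin q) :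
    Complex.exp ((2 * Real.pi / ((m+1 : ℕ) : ℂ)) * Complex.I *
        ∑ x, ((x.val + 1 : ℕ) : ℂ) * (nhat ((f ∘ (finRotate (m+1)).symm) x) : ℂ))
      = Complex.exp (2 * Real.pi * Complex.I * (∑ x, (nhat (f x) : ℂ)) / ((m+1 : ℕ) : ℂ)) *
        Complex.exp ((2 * Real.pi / ((m+1 : ℕ) : ℂ)) * Complex.I *
          ∑ x, ((x.val + 1 : ℕ) : ℂ) * (nhat (f x) : ℂ)) := by
  set c : ℂ := (2 * Real.pi / ((m+1 : ℕ) : ℂ)) * Complex.I with hc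
  set K : ℕ := nhat (f (Fin.last m)) with hK
  -- reindex the left sum
  have hre : (∑ x, ((x.val + 1 : ℕ) : ℂ) * (nhat ((f ∘ (finRotate (m+1)).symm) x) : ℂ))
      = ∑ y : Fin (m+1), ((((y.val + 1) % (m+1)) + 1 : ℕ) : ℂ) * (nhat (f y) : ℂ) := by
    rw [← Equiv.sum_comp (finRotate (m+1))
      (fun x => ((x.val + 1 : ℕ) : ℂ) * (nhat ((f ∘ (finRotate (m+1)).symm) x) : ℂ))]
    apply Finset.sum_congr rfl
    intro y _
    simp only [Function.comp, Equiv.symm_apply_apply]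
    congr 2
    simp [finRotate_succ_apply, Fin.add_def, Nat.add_mod]
  rw [hre]
  set S1 : ℂ := ∑ y : Fin (m+1), ((((y.val + 1) % (m+1)) + 1 : ℕ) : ℂ) * (nhat (f y) : ℂ)
  set Sn : ℂ := ∑ x, (nhat (f x) : ℂ)
  set S2 : ℂ := ∑ x, ((x.val + 1 : ℕ) : ℂ) * (nhat (f x) : ℂ)
  have hnat := nat_sum_key m (fun y => nhat (f y))
  have hC : S1 + ((m+1 : ℕ) : ℂ) * (K : ℂ) = Sn + S2 := by
    simp only [S1, Sn, S2, hK]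
    exact_mod_cast hnat
  have hne : ((m+1 : ℕ) : ℂ) ≠ 0 := by
    exact_mod_cast Nat.succ_ne_zero m
  have hK1 : Complex.exp ((K : ℂ) * (2 * Real.pi * Complex.I)) = 1 := by
    exact_mod_cast Complex.exp_int_mul_two_pi_mul_I (K : ℤ)
  have harg : c * S1 + (K : ℂ) * (2 * Real.pi * Complex.I)
      = 2 * Real.pi * Complex.I * Sn / ((m+1 : ℕ) : ℂ) + c * S2 := by
    have hne' : ((m : ℂ) + 1) ≠ 0 := by exact_mod_cast Nat.succ_ne_zero m
    have hS1 : S1 = Sn + S2 - ((m+1 : ℕ) : ℂ) * (K : ℂ) := by linear_combination hC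
    rw [hS1, hc]
    push_cast
    field_simp [hne']
    ring
  calc Complex.exp (c * S1)
      = Complex.exp (c * S1) * Complex.exp ((K : ℂ) * (2 * Real.pi * Complex.I)) := by
        rw [hK1, mul_one]
    _ = Complex.exp (c * S1 + (K : ℂ) * (2 * Real.pi * Complex.I)) := (Complex.exp_add _ _).symm
    _ = Complex.exp (2 * Real.pi * Complex.I * Sn / ((m+1 : ℕ) : ℂ) + c * S2) := by rw [harg]
    _ = _ := Complex.exp_add _ _

/-- large gauge transformation identity `T U T* = exp(i 2π N̂ / L) · U`
(Oshikawa flux insertion); moreover `T` commutes with `N̂`. -/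
theorem large_gauge_conj (q L : ℕ) (hq : 1 ≤ q) (hL : 1 ≤ L) (nhat : Fin q → ℕ)
    (hrange : ∀ a, nhat a < q) :
    Tshift L q * Nop L q nhat = Nop L q nhat * Tshift L q ∧
      Tshift L q * Ugauge L q nhat * star (Tshift L q) =
        (Matrix.diagonal fun f =>
            Complex.exp (2 * Real.pi * Complex.I * (∑ x, (nhat (f x) : ℂ)) / L)) *
          Ugauge L q nhat := by
  obtain ⟨m, rfl⟩ : ∃ m, L = m + 1 := ⟨L - 1, by omega⟩
  constructor
  · ext f g
    rw [Nop, Matrix.mul_diagonal, Matrix.diagonal_mul]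
    by_cases h : f = shiftIdx (m+1) q g
    · simp only [Tshift, Matrix.of_apply, if_pos h, one_mul, mul_one]
      subst h
      congr 1
      rw [shiftIdx_eq]
      exact_mod_cast (Equiv.sum_comp (finRotate (m+1)) (fun x => nhat (g x))).symm
    · simp [Tshift, h]
  · ext f g
    have hstar : ∀ a b : Fin (m+1) → Fin q,
        star (Tshift (m+1) q) a b = if b = shiftIdx (m+1) q a then (1 : ℂ) else 0 := by
      intro a b
      simp [Tshift, Matrix.star_apply]
    have hTU : ∀ h : Fin (m+1) → Fin q,
        (Tshift (m+1) q * Matrix.diagonal (fun f' : Fin (m+1) → Fin q =>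
            Complex.exp ((2 * Real.pi / ((m+1 : ℕ) : ℂ)) * Complex.I *
              ∑ x : Fin (m+1), ((x.val + 1 : ℕ) : ℂ) * (nhat (f' x) : ℂ)))) f h
          = if f = shiftIdx (m+1) q h then Complex.exp ((2 * Real.pi / ((m+1 : ℕ) : ℂ))
            * Complex.I * ∑ x : Fin (m+1), ((x.val + 1 : ℕ) : ℂ) * (nhat (h x) : ℂ)) else 0 := by
      intro h
      rw [Matrix.mul_diagonal]
      simp [Tshift, ite_mul]
    rw [Ugauge, Matrix.mul_apply]
    simp only [hTU, hstar]
    simp only [shift_eq_iff m q f, shift_eq_iff m q g, ite_mul, zero_mul, mul_ite, mul_one,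
      mul_zero]
    rw [Finset.sum_ite_eq' Finset.univ (g ∘ (finRotate (m+1)).symm)]
    simp only [Finset.mem_univ, if_true]
    rw [Matrix.diagonal_mul_diagonal, Matrix.diagonal_apply]
    have hiff : g ∘ (finRotate (m+1)).symm = f ∘ (finRotate (m+1)).symm ↔ g = f := by
      constructor
      · intro h
        funext i
        have := congrFun h (finRotate (m+1) i)
        simpa only [Function.comp_apply, Equiv.symm_apply_apply] using this
      · rintro rfl; rfl
    by_cases hfg : f = g
    · subst hfg
      rw [if_pos rfl, if_pos rfl]
      exact scalar_key m q nhat f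
    · rw [if_neg (fun h => hfg ((hiff.mp h).symm)), if_neg hfg]
end

section
/- Suppose |Ψ⟩ ∈ ⊗_{x=1}^{L} ℂ^q is a simultaneous eigenvector of the cyclic shift T and of the total charge N̂ = Σ_x n̂_x with eigenvalue N satisfying N/L ∉ ℤ. Then the state U|Ψ⟩, with U = exp(i(2π/L) Σ_x x n̂_x), is a T-eigenvector whose eigenvalue differs from that of |Ψ⟩ by the nontrivial phase e^{i2πN/L} ≠ 1; in particular ⟨Ψ|U|Ψ⟩ = 0. -/
open Matrix Complex

/-!
Write `ζ = exp (2πi/L)` and `D(f) = ∑ₓ (x+1) n(fₓ)` for the dipole moment of a configuration, so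
that `U` is diagonal with entries `ζ ^ D(f)`. Translating a configuration by one site changes `D`
by its total charge, up to a multiple of `L` coming from the particles that wrap around the
ring; hence `T U = ζ ^ N̂ U T`, and on the charge-`N` sector `U` multiplies the
`T`-eigenvalue by `ζ ^ N`, which is `≠ 1` exactly when `L ∤ N`. Eigenvectors of the unitary `T`
whose eigenvalues differ by such a factor are orthogonal.
-/

open Equiv

namespace Matrix

variable {ι R : Type*} [Fintype ι] [DecidableEq ι]

lemma permMatrix_mem_unitaryGroup [CommRing R] [StarRing R] (σ : Perm ι) :
    σ.permMatrix R ∈ unitaryGroup ι R := by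
  rw [mem_unitaryGroup_iff', star_eq_conjTranspose, conjTranspose_permMatrix, ← permMatrix_mul,
    mul_inv_cancel, permMatrix_one]

lemma star_mulVec_dotProduct_mulVec_of_mem_unitaryGroup [CommRing R] [StarRing R]
    {T : Matrix ι ι R} (hT : T ∈ unitaryGroup ι R) (v w : ι → R) :
    star (T *ᵥ v) ⬝ᵥ (T *ᵥ w) = star v ⬝ᵥ w := by
  rw [star_mulVec, dotProduct_mulVec, vecMul_vecMul, ← star_eq_conjTranspose,
    mem_unitaryGroup_iff'.mp hT, vecMul_one]

/-- Stated with eigenvalues `a` and `μ * a` rather than `a ≠ b`, so that `a = 0` needs no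
separate treatment. -/
lemma star_dotProduct_eq_zero_of_mulVec_eq_smul [Field R] [PartialOrder R] [StarRing R]
    [StarOrderedRing R] {T : Matrix ι ι R} (hT : T ∈ unitaryGroup ι R) {v w : ι → R}
    {a μ : R} (hv : T *ᵥ v = a • v) (hw : T *ᵥ w = (μ * a) • w) (hμ : μ ≠ 1) :
    star v ⬝ᵥ w = 0 := by
  by_contra hvw
  have hv0 : star v ⬝ᵥ v ≠ 0 := by
    rw [Ne, dotProduct_star_self_eq_zero]
    rintro rfl
    simp at hvw
  have hvv := star_mulVec_dotProduct_mulVec_of_mem_unitaryGroup hT v v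
  have hvw' := star_mulVec_dotProduct_mulVec_of_mem_unitaryGroup hT v w
  rw [hv, star_smul, smul_dotProduct, dotProduct_smul, smul_smul, smul_eq_mul] at hvv
  rw [hv, hw, star_smul, smul_dotProduct, dotProduct_smul, smul_smul, smul_eq_mul] at hvw'
  have ha : star a * a = 1 := by
    simpa using mul_right_cancel₀ hv0 (hvv.trans (one_mul _).symm)
  have haμ : star a * (μ * a) = 1 := mul_right_cancel₀ hvw (hvw'.trans (one_mul _).symm)
  exact hμ (by linear_combination haμ - μ * ha)

lemma eq_of_diagonal_mulVec_eq_smul [Semiring R] [IsRightCancelMulZero R] {d v : ι → R} {c : R}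
    (h : diagonal d *ᵥ v = c • v) {i : ι} (hi : v i ≠ 0) : d i = c := by
  have hi' := congrFun h i
  rw [mulVec_diagonal, Pi.smul_apply, smul_eq_mul] at hi'
  exact mul_right_cancel₀ hi hi'

lemma permMatrix_mulVec_diagonal_mulVec_eq_smul [CommRing R] (τ : Perm ι) {u v : ι → R}
    {μ a : R} (hv : τ.permMatrix R *ᵥ v = a • v) (hu : ∀ i, v (τ i) ≠ 0 → u (τ i) = μ * u i) :
    τ.permMatrix R *ᵥ (diagonal u *ᵥ v) = (μ * a) • (diagonal u *ᵥ v) := by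
  ext i
  have hvi : v (τ i) = a * v i := by simpa [permMatrix_mulVec] using congrFun hv i
  simp only [permMatrix_mulVec, Function.comp_apply, mulVec_diagonal, Pi.smul_apply, smul_eq_mul]
  have key : u (τ i) * v (τ i) = μ * u i * v (τ i) := by
    by_cases h : v (τ i) = 0
    · rw [h, mul_zero, mul_zero]
    · rw [hu i h]
  rw [key, hvi]
  ring

end Matrix

def dipole {L : ℕ} (a : Fin L → ℕ) : ℕ :=
  ∑ x, (x.val + 1) * a x

lemma dipole_comp_finRotate_add_sum {L : ℕ} [NeZero L] (a : Fin L → ℕ) :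
    dipole (a ∘ finRotate L) + ∑ x, a x = dipole a + L * a 0 := by
  obtain ⟨n, rfl⟩ := Nat.exists_eq_add_one_of_ne_zero (NeZero.ne L)
  have hrot : dipole (a ∘ finRotate (n + 1)) =
      ∑ i : Fin n, (i.val + 1) * a i.succ + (n + 1) * a 0 := by
    simp [dipole, Fin.sum_univ_castSucc]
  have hdip : dipole a = a 0 + ∑ i : Fin n, (i.val + 1) * a i.succ + ∑ i : Fin n, a i.succ := by
    simp [dipole, Fin.sum_univ_succ, add_mul, Finset.sum_add_distrib]
    ring
  rw [hrot, hdip, Fin.sum_univ_succ]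
  ring

lemma pow_dipole_eq {M : Type*} [Monoid M] {L : ℕ} [NeZero L] {ζ : M} (hζ : ζ ^ L = 1)
    (a : Fin L → ℕ) : ζ ^ dipole a = ζ ^ (∑ x, a x) * ζ ^ dipole (a ∘ finRotate L) := by
  rw [← pow_add, add_comm, dipole_comp_finRotate_add_sum, pow_add, pow_mul, hζ, one_pow, mul_one]

def configRotate (L q : ℕ) : Perm (Fin L → Fin q) :=
  (finRotate L).arrowCongr (Equiv.refl _)

lemma configRotate_apply_comp_finRotate (L q : ℕ) (f : Fin L → Fin q) :
    configRotate L q f ∘ finRotate L = f := by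
  funext x
  simp only [configRotate, Function.comp_apply, arrowCongr_apply, symm_apply_apply, coe_refl, id]

lemma shiftIdx_eq_comp_finRotate (L q : ℕ) [NeZero L] (g : Fin L → Fin q) :
    shiftIdx L q g = g ∘ finRotate L := by
  funext i
  simp only [shiftIdx, Function.comp_apply, finRotate_apply]
  congr 1
  ext
  simp [Fin.val_add]

lemma Tshift_eq_permMatrix (L q : ℕ) [NeZero L] :
    Tshift L q = (configRotate L q).permMatrix ℂ := by
  ext f g
  have hiff : configRotate L q f = g ↔ f = g ∘ finRotate L := Equiv.comp_symm_eq _ _ _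
  simp [Tshift, shiftIdx_eq_comp_finRotate, PEquiv.toMatrix_apply, hiff]

lemma Ugauge_eq_diagonal_pow (L q : ℕ) (nhat : Fin q → ℕ) :
    Ugauge L q nhat = diagonal fun f => cexp (2 * Real.pi * I / L) ^ dipole (nhat ∘ f) := by
  simp only [Ugauge, dipole, ← Complex.exp_nat_mul, Function.comp_apply]
  push_cast
  congr! 3 with f
  ring

theorem U1_LSM_momentum_boost_general (q L : ℕ) (hL : 1 ≤ L) (nhat : Fin q → ℕ)
    (N : ℤ) (hN : ¬ ((L : ℤ) ∣ N)) (lam : ℂ)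
    (Ψ : (Fin L → Fin q) → ℂ)
    (heigT : (Tshift L q).mulVec Ψ = lam • Ψ)
    (heigN : (Nop L q nhat).mulVec Ψ = (N : ℂ) • Ψ) :
    (Tshift L q).mulVec ((Ugauge L q nhat).mulVec Ψ) =
        (Complex.exp (2 * Real.pi * Complex.I * N / L) * lam) • (Ugauge L q nhat).mulVec Ψ ∧
      Complex.exp (2 * Real.pi * Complex.I * N / L) ≠ 1 ∧
      ∑ f, (starRingEnd ℂ) (Ψ f) * ((Ugauge L q nhat).mulVec Ψ) f = 0 := by
  have : NeZero L := ⟨by omega⟩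
  set ζ := cexp (2 * Real.pi * I / L)
  have hζ : IsPrimitiveRoot ζ L := Complex.isPrimitiveRoot_exp L (NeZero.ne L)
  have hμ : cexp (2 * Real.pi * I * N / L) = ζ ^ N := by
    rw [← Complex.exp_int_mul]
    congr 1
    ring
  have hcharge : ∀ f, Ψ f ≠ 0 → ((∑ x, nhat (f x) : ℕ) : ℤ) = N := fun f hf => by
    exact_mod_cast eq_of_diagonal_mulVec_eq_smul heigN hf
  rw [Tshift_eq_permMatrix] at heigT ⊢
  rw [hμ, Ugauge_eq_diagonal_pow]
  have hboost := permMatrix_mulVec_diagonal_mulVec_eq_smul (configRotate L q) heigT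
    (u := fun f => ζ ^ dipole (nhat ∘ f)) (μ := ζ ^ N) fun f hf => by
      rw [pow_dipole_eq hζ.pow_eq_one, Function.comp_assoc, configRotate_apply_comp_finRotate,
        ← hcharge _ hf, zpow_natCast]
      rfl
  have hζN : ζ ^ N ≠ 1 := (hζ.zpow_eq_one_iff_dvd N).not.mpr hN
  exact ⟨hboost, hζN, open scoped ComplexOrder in
    star_dotProduct_eq_zero_of_mulVec_eq_smul (permMatrix_mem_unitaryGroup _) heigT hboost hζN⟩

/-- U(1) × T LSM. If `Ψ` is a simultaneous eigenvector of the cyclic shift `T`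
(eigenvalue `λ`) and the total charge `N̂` with eigenvalue `N` such that `N/L ∉ ℤ`, then
`UΨ` is a `T`-eigenvector with eigenvalue `e^{i2πN/L} λ`, the boost phase `e^{i2πN/L} ≠ 1`,
and `⟨Ψ, U Ψ⟩ = 0`. -/
theorem U1_LSM_momentum_boost (q L : ℕ) (hq : 1 ≤ q) (hL : 1 ≤ L) (nhat : Fin q → ℕ)
    (hrange : ∀ a, nhat a < q) (N : ℤ) (hN : ¬ ((L : ℤ) ∣ N)) (lam : ℂ)
    (Ψ : (Fin L → Fin q) → ℂ) (hΨ : Ψ ≠ 0)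
    (heigT : (Tshift L q).mulVec Ψ = lam • Ψ)
    (heigN : (Nop L q nhat).mulVec Ψ = (N : ℂ) • Ψ) :
    (Tshift L q).mulVec ((Ugauge L q nhat).mulVec Ψ) =
        (Complex.exp (2 * Real.pi * Complex.I * N / L) * lam) • (Ugauge L q nhat).mulVec Ψ ∧
      Complex.exp (2 * Real.pi * Complex.I * N / L) ≠ 1 ∧
      ∑ f, (starRingEnd ℂ) (Ψ f) * ((Ugauge L q nhat).mulVec Ψ) f = 0 :=
  U1_LSM_momentum_boost_general q L hL nhat N hN lam Ψ heigT heigN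
end
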